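/- Let a < b and consider two 4-PI operators Π[A,B₁,B₂,C₀,C₁,C₂] : ℝ^k × L²([a,b],ℝ^n) → ℝ^p × L²([a,b],ℝ^q) and Π[P,Q₁,Q₂,R₀,R₁,R₂] : ℝ^m × L²([a,b],ℝ^r) → ℝ^k × L²([a,b],ℝ^n) with continuous matrix-valued parameters. Then their composition equals the 4-PI operator Π[P̂,Q̂₁,Q̂₂,R̂₀,R̂₁,R̂₂] where: P̂ = AP + ∫_a^b B₁(s)Q₂(s)ds; Q̂₁(s) = AQ₁(s) + B₁(s)R₀(s) + ∫_s^b B₁(η)R₁(η,s)dη + ∫_a^s B₁(η)R₂(η,s)dη; Q̂₂(s) = B₂(s)P + C₀(s)Q₂(s) + ∫_a^s C₁(s,η)Q₂(η)dη + ∫_s^b C₂(s,η)Q₂(η)dη; R̂₀(s) = C₀(s)R₀(s); R̂₁(s,η) = B₂(s)Q₁(η) + C₀(s)R₁(s,η) + C₁(s,η)R₀(η) + ∫_a^η C₁(s,θ)R₂(θ,η)dθ + ∫_η^s C₁(s,θ)R₁(θ,η)dθ + ∫_s^b C₂(s,θ)R₁(θ,η)dθ; R̂₂(s,η) = B₂(s)Q₁(η)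 + C₀(s)R₂(s,η) + C₂(s,η)R₀(η) + ∫_a^s C₁(s,θ)R₂(θ,η)dθ + ∫_s^η C₂(s,θ)R₂(θ,η)dθ + ∫_η^b C₂(s,θ)R₁(θ,η)dθ. In particular, the composition of two 4-PI operators is a 4-PI operator. -/

import Mathlib

open MeasureTheory Set

noncomputable local instance {k l : ℕ} : NormedAddCommGroup (Matrix (Fin k) (Fin l) ℝ) :=
  Matrix.normedAddCommGroup

noncomputable local instance {k l : ℕ} : NormedSpace ℝ (Matrix (Fin k) (Fin l) ℝ) :=
  Matrix.normedSpace

/-- Matrix–vector multiplication, viewed as a map between Euclidean spaces. -/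
def mulVecE {n m : ℕ} (M : Matrix (Fin n) (Fin m) ℝ) (v : EuclideanSpace ℝ (Fin m)) :
    EuclideanSpace ℝ (Fin n) := WithLp.toLp 2 (M.mulVec v)

/-- The 3-PI operator `P_{N₀,N₁,N₂}`, applied pointwise. -/
noncomputable def threePI {n m : ℕ} (a b : ℝ)
    (N₀ : ℝ → Matrix (Fin n) (Fin m) ℝ)
    (N₁ N₂ : ℝ → ℝ → Matrix (Fin n) (Fin m) ℝ)
    (y : ℝ → EuclideanSpace ℝ (Fin m)) (s : ℝ) : EuclideanSpace ℝ (Fin n) :=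
  mulVecE (N₀ s) (y s) + (∫ θ in a..s, mulVecE (N₁ s θ) (y θ))
    + ∫ θ in s..b, mulVecE (N₂ s θ) (y θ)

/-- Finite-dimensional component of the 4-PI operator `Π[P,Q₁,Q₂,R₀,R₁,R₂]`:
`P x + ∫_a^b Q₁(s) y(s) ds`. -/
noncomputable def fourPIfin {p n m : ℕ} (a b : ℝ)
    (P : Matrix (Fin p) (Fin m) ℝ) (Q₁ : ℝ → Matrix (Fin p) (Fin n) ℝ)
    (x : EuclideanSpace ℝ (Fin m)) (y : ℝ → EuclideanSpace ℝ (Fin n)) :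
    EuclideanSpace ℝ (Fin p) :=
  mulVecE P x + ∫ s in a..b, mulVecE (Q₁ s) (y s)

/-- Function-valued component of the 4-PI operator `Π[P,Q₁,Q₂,R₀,R₁,R₂]`:
`s ↦ Q₂(s) x + (P_{R₀,R₁,R₂} y)(s)`. -/
noncomputable def fourPIfun {q n m : ℕ} (a b : ℝ)
    (Q₂ : ℝ → Matrix (Fin q) (Fin m) ℝ)
    (R₀ : ℝ → Matrix (Fin q) (Fin n) ℝ) (R₁ R₂ : ℝ → ℝ → Matrix (Fin q) (Fin n) ℝ)
    (x : EuclideanSpace ℝ (Fin m)) (y : ℝ → EuclideanSpace ℝ (Fin n)) (s : ℝ) :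
    EuclideanSpace ℝ (Fin q) :=
  mulVecE (Q₂ s) x + threePI a b R₀ R₁ R₂ y s

/-!
A 3-PI operator is a multiplication operator plus the integral operator on `[a, b]` whose kernel
is `N₁` below the diagonal and `N₂` above it. Composing two 4-PI operators therefore only
requires composing integral operators, and by Fubini's theorem on the square the composite
of the kernels `K` and `L` is `(s, η) ↦ ∫ θ, K s θ * L θ η`. Splitting this `θ`-integral at `s`
and `η`, according to which pieces of the two kernels are active, gives the formulas for `R̂₁`
and `R̂₂`; splitting at `s` alone gives `Q̂₁` and `Q̂₂`. All kernels are bounded and `y` is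
integrable on `[a, b]`, which provides every integrability condition along the way.
-/

section

/- Mathlib's topology on matrices is the product topology, which is not reducibly the topology of
the sup norm `Matrix.normedAddCommGroup`; fixing the norm topology lets `ContinuousOn`, `MemLp`
and `AEStronglyMeasurable` below all refer to the same instance. -/
noncomputable local instance matrixNormTopology {k l : ℕ} :
    TopologicalSpace (Matrix (Fin k) (Fin l) ℝ) :=
  (inferInstance : NormedAddCommGroup (Matrix (Fin k) (Fin l) ℝ)).toUniformSpace.toTopologicalSpace

noncomputable def LinearMap.toContinuousBilin {E F G : Type*}
    [NormedAddCommGroup E] [NormedSpace ℝ E] [FiniteDimensional ℝ E]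
    [NormedAddCommGroup F] [NormedSpace ℝ F] [FiniteDimensional ℝ F]
    [NormedAddCommGroup G] [NormedSpace ℝ G] (B : E →ₗ[ℝ] F →ₗ[ℝ] G) : E →L[ℝ] F →L[ℝ] G :=
  LinearMap.toContinuousLinearMap (LinearMap.toContinuousLinearMap.toLinearMap ∘ₗ B)

section MulVecE

variable {u v w : ℕ}

@[simp]
lemma mulVecE_add (M : Matrix (Fin u) (Fin v) ℝ) (x y : EuclideanSpace ℝ (Fin v)) :
    mulVecE M (x + y) = mulVecE M x + mulVecE M y := by
  simp [mulVecE, Matrix.mulVec_add]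

@[simp]
lemma add_mulVecE (M N : Matrix (Fin u) (Fin v) ℝ) (x : EuclideanSpace ℝ (Fin v)) :
    mulVecE (M + N) x = mulVecE M x + mulVecE N x := by
  simp [mulVecE, Matrix.add_mulVec]

@[simp]
lemma mulVecE_mulVecE (M : Matrix (Fin u) (Fin v) ℝ) (N : Matrix (Fin v) (Fin w) ℝ)
    (x : EuclideanSpace ℝ (Fin w)) : mulVecE M (mulVecE N x) = mulVecE (M * N) x := by
  simp [mulVecE, Matrix.mulVec_mulVec]

variable (u v) in
noncomputable def mulVecCLM :
    Matrix (Fin u) (Fin v) ℝ →L[ℝ] EuclideanSpace ℝ (Fin v) →L[ℝ] EuclideanSpace ℝ (Fin u) :=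
  LinearMap.toContinuousBilin <| LinearMap.mk₂ ℝ mulVecE add_mulVecE
    (fun c M x => by simp [mulVecE, Matrix.smul_mulVec]) mulVecE_add
    (fun c M x => by simp [mulVecE, Matrix.mulVec_smul])

variable (u v w) in
noncomputable def matMulCLM :
    Matrix (Fin u) (Fin v) ℝ →L[ℝ] Matrix (Fin v) (Fin w) ℝ →L[ℝ] Matrix (Fin u) (Fin w) ℝ :=
  LinearMap.toContinuousBilin (mulLinearMap ℝ)

lemma mulVecE_intervalIntegral (M : Matrix (Fin u) (Fin v) ℝ) {g : ℝ → EuclideanSpace ℝ (Fin v)}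
    {a b : ℝ} (hg : IntervalIntegrable g volume a b) :
    mulVecE M (∫ t in a..b, g t) = ∫ t in a..b, mulVecE M (g t) :=
  ((mulVecCLM u v M).intervalIntegral_comp_comm hg).symm

lemma intervalIntegral_mulVecE {M : ℝ → Matrix (Fin u) (Fin v) ℝ} (x : EuclideanSpace ℝ (Fin v))
    {a b : ℝ} (hM : IntervalIntegrable M volume a b) :
    ∫ t in a..b, mulVecE (M t) x = mulVecE (∫ t in a..b, M t) x :=
  ((mulVecCLM u v).flip x).intervalIntegral_comp_comm hM

end MulVecE

lemma ContinuousOn.matrix_mul {X : Type*} [TopologicalSpace X] {u v w : ℕ} {S : Set X}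
    {M : X → Matrix (Fin u) (Fin v) ℝ} {N : X → Matrix (Fin v) (Fin w) ℝ}
    (hM : ContinuousOn M S) (hN : ContinuousOn N S) : ContinuousOn (fun t => M t * N t) S :=
  (continuous_fst.matrix_mul continuous_snd).comp_continuousOn (hM.prodMk hN)

lemma ContinuousOn.memLp_top_restrict {X E : Type*} [TopologicalSpace X] [T2Space X]
    [MeasurableSpace X] [OpensMeasurableSpace X] [SecondCountableTopology X]
    [NormedAddCommGroup E] {μ : Measure X} {K : Set X} {f : X → E}
    (hK : IsCompact K) (hf : ContinuousOn f K) : MemLp f ⊤ (μ.restrict K) := by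
  obtain ⟨C, hC⟩ := hK.exists_bound_of_continuousOn hf
  exact memLp_top_of_bound (hf.aestronglyMeasurable hK.measurableSet) C
    (ae_restrict_of_forall_mem hK.measurableSet hC)

lemma memLp_top_piecewise_of_continuousOn {X E : Type*} [TopologicalSpace X] [T2Space X]
    [MeasurableSpace X] [OpensMeasurableSpace X] [SecondCountableTopology X]
    [NormedAddCommGroup E] {μ : Measure X} {K S : Set X} [DecidablePred (· ∈ S)] {f g : X → E}
    (hK : IsCompact K) (hS : MeasurableSet S) (hf : ContinuousOn f K) (hg : ContinuousOn g K) :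
    MemLp (S.piecewise f g) ⊤ (μ.restrict K) :=
  MemLp.piecewise hS ((hf.memLp_top_restrict hK).restrict S)
    ((hg.memLp_top_restrict hK).restrict Sᶜ)

section KernelComposition

variable {α β : Type*} [MeasurableSpace α] [MeasurableSpace β] {μ : Measure α} {ν : Measure β}
  {u v w : ℕ}

lemma MeasureTheory.MemLp.matrix_mul_top {M : α → Matrix (Fin u) (Fin v) ℝ}
    {N : α → Matrix (Fin v) (Fin w) ℝ} (hM : MemLp M ⊤ μ) (hN : MemLp N ⊤ μ) :
    MemLp (fun t => M t * N t) ⊤ μ :=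
  (matMulCLM u v w).memLp_of_bilin ⊤ hM hN

lemma MeasureTheory.MemLp.integrable_mulVecE {M : α → Matrix (Fin u) (Fin v) ℝ}
    {g : α → EuclideanSpace ℝ (Fin v)} (hM : MemLp M ⊤ μ) (hg : Integrable g μ) :
    Integrable (fun t => mulVecE (M t) (g t)) μ :=
  memLp_one_iff_integrable.1 <|
    (mulVecCLM u v).memLp_of_bilin 1 hM (memLp_one_iff_integrable.2 hg)

variable [IsFiniteMeasure μ] [IsFiniteMeasure ν] {K : α → Matrix (Fin u) (Fin v) ℝ}
  {L : α → β → Matrix (Fin v) (Fin w) ℝ} {y : β → EuclideanSpace ℝ (Fin w)}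

lemma integrable_prod_mulVecE_mul (hK : MemLp K ⊤ μ) (hL : MemLp (Function.uncurry L) ⊤ (μ.prod ν))
    (hy : Integrable y ν) :
    Integrable (fun z : α × β => mulVecE (K z.1 * L z.1 z.2) (y z.2)) (μ.prod ν) :=
  MemLp.integrable_mulVecE (MemLp.matrix_mul_top (hK.comp_fst ν) hL) (hy.comp_snd μ)

lemma ae_integral_mulVecE_mul (hK : MemLp K ⊤ μ) (hL : MemLp (Function.uncurry L) ⊤ (μ.prod ν)) :
    ∀ᵐ η ∂ν, ∫ θ, mulVecE (K θ * L θ η) (y η) ∂μ = mulVecE (∫ θ, K θ * L θ η ∂μ) (y η) := by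
  filter_upwards [(MemLp.integrable le_top (MemLp.matrix_mul_top (hK.comp_fst ν) hL)).prod_left_ae]
    with η hη
  exact ((mulVecCLM u w).flip (y η)).integral_comp_comm hη

lemma integrable_mulVecE_integral_mul (hK : MemLp K ⊤ μ)
    (hL : MemLp (Function.uncurry L) ⊤ (μ.prod ν)) (hy : Integrable y ν) :
    Integrable (fun η => mulVecE (∫ θ, K θ * L θ η ∂μ) (y η)) ν :=
  (integrable_prod_mulVecE_mul hK hL hy).integral_prod_right.congr (ae_integral_mulVecE_mul hK hL)

lemma integrable_integral_mulVecE (hL : MemLp (Function.uncurry L) ⊤ (μ.prod ν))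
    (hy : Integrable y ν) : Integrable (fun θ => ∫ η, mulVecE (L θ η) (y η) ∂ν) μ :=
  (hL.integrable_mulVecE (hy.comp_snd μ)).integral_prod_left

lemma integral_integral_mulVecE_mul (hK : MemLp K ⊤ μ)
    (hL : MemLp (Function.uncurry L) ⊤ (μ.prod ν)) (hy : Integrable y ν) :
    ∫ θ, ∫ η, mulVecE (K θ * L θ η) (y η) ∂ν ∂μ
      = ∫ η, mulVecE (∫ θ, K θ * L θ η ∂μ) (y η) ∂ν := by
  rw [integral_integral_swap (integrable_prod_mulVecE_mul hK hL hy)]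
  exact integral_congr_ae (ae_integral_mulVecE_mul hK hL)

end KernelComposition

section Interval

variable {E : Type*} [NormedAddCommGroup E] {a b c d : ℝ}

lemma intervalIntegral_eq_integral_Icc [NormedSpace ℝ E] (hab : a ≤ b) (f : ℝ → E) :
    ∫ x in a..b, f x = ∫ x in Icc a b, f x := by
  rw [intervalIntegral.integral_of_le hab, integral_Icc_eq_integral_Ioc]

lemma MeasureTheory.Integrable.intervalIntegrable_of_mem {f : ℝ → E}
    (hf : Integrable f (volume.restrict (Icc a b))) (hc : c ∈ Icc a b) (hd : d ∈ Icc a b) :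
    IntervalIntegrable f volume c d :=
  (IntegrableOn.mono_set hf (uIcc_subset_Icc hc hd)).intervalIntegrable

lemma ContinuousOn.intervalIntegrable_of_mem {f : ℝ → E} (hf : ContinuousOn f (Icc a b))
    (hc : c ∈ Icc a b) (hd : d ∈ Icc a b) : IntervalIntegrable f volume c d :=
  (hf.mono (uIcc_subset_Icc hc hd)).intervalIntegrable

variable [NormedSpace ℝ E] {F f g h : ℝ → E}

lemma intervalIntegral_eq_add_of_eqOn_Ioo (hac : a ≤ c) (hcb : c ≤ b)
    (hf : IntervalIntegrable f volume a c) (hg : IntervalIntegrable g volume c b)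
    (hFf : EqOn F f (Ioo a c)) (hFg : EqOn F g (Ioo c b)) :
    ∫ x in a..b, F x = (∫ x in a..c, f x) + ∫ x in c..b, g x := by
  rw [← intervalIntegral.integral_add_adjacent_intervals
      (hf.congr_uIoo (uIoo_of_le hac ▸ hFf.symm)) (hg.congr_uIoo (uIoo_of_le hcb ▸ hFg.symm)),
    intervalIntegral.integral_congr_Ioo_of_le hac hFf,
    intervalIntegral.integral_congr_Ioo_of_le hcb hFg]

lemma intervalIntegral_eq_add_add_of_eqOn_Ioo (hac : a ≤ c) (hcd : c ≤ d) (hdb : d ≤ b)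
    (hf : IntervalIntegrable f volume a c) (hg : IntervalIntegrable g volume c d)
    (hh : IntervalIntegrable h volume d b) (hFf : EqOn F f (Ioo a c))
    (hFg : EqOn F g (Ioo c d)) (hFh : EqOn F h (Ioo d b)) :
    ∫ x in a..b, F x = (∫ x in a..c, f x) + (∫ x in c..d, g x) + ∫ x in d..b, h x := by
  have hF : IntervalIntegrable F volume a d :=
    (hf.congr_uIoo (uIoo_of_le hac ▸ hFf.symm)).trans (hg.congr_uIoo (uIoo_of_le hcd ▸ hFg.symm))
  rw [intervalIntegral_eq_add_of_eqOn_Ioo (hac.trans hcd) hdb hF hh (fun _ _ => rfl) hFh,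
    intervalIntegral_eq_add_of_eqOn_Ioo hac hcd hf hg hFf hFg]

end Interval

section PIKernel

variable {n m : ℕ} {a b : ℝ} {N₁ N₂ : ℝ → ℝ → Matrix (Fin n) (Fin m) ℝ}

noncomputable def piKernel (N₁ N₂ : ℝ → ℝ → Matrix (Fin n) (Fin m) ℝ) (s θ : ℝ) :
    Matrix (Fin n) (Fin m) ℝ :=
  if θ ≤ s then N₁ s θ else N₂ s θ

lemma piKernel_of_le {s θ : ℝ} (h : θ ≤ s) : piKernel N₁ N₂ s θ = N₁ s θ := if_pos h

lemma piKernel_of_lt {s θ : ℝ} (h : s < θ) : piKernel N₁ N₂ s θ = N₂ s θ := if_neg h.not_ge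

lemma memLp_top_piKernel
    (hN₁ : ContinuousOn (fun z : ℝ × ℝ => N₁ z.1 z.2) (Icc a b ×ˢ Icc a b))
    (hN₂ : ContinuousOn (fun z : ℝ × ℝ => N₂ z.1 z.2) (Icc a b ×ˢ Icc a b)) :
    MemLp (Function.uncurry (piKernel N₁ N₂)) ⊤
      ((volume.restrict (Icc a b)).prod (volume.restrict (Icc a b))) := by
  rw [Measure.prod_restrict, ← Measure.volume_eq_prod]
  exact memLp_top_piecewise_of_continuousOn (S := {z : ℝ × ℝ | z.2 ≤ z.1})
    (isCompact_Icc.prod isCompact_Icc) (measurableSet_le measurable_snd measurable_fst) hN₁ hN₂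

lemma memLp_top_piKernel_apply
    (hN₁ : ContinuousOn (fun z : ℝ × ℝ => N₁ z.1 z.2) (Icc a b ×ˢ Icc a b))
    (hN₂ : ContinuousOn (fun z : ℝ × ℝ => N₂ z.1 z.2) (Icc a b ×ˢ Icc a b))
    {s : ℝ} (hs : s ∈ Icc a b) :
    MemLp (piKernel N₁ N₂ s) ⊤ (volume.restrict (Icc a b)) := by
  have h : piKernel N₁ N₂ s = (Iic s).piecewise (N₁ s) (N₂ s) := by
    funext θ
    simp [piKernel, Set.piecewise]
  rw [h]
  exact memLp_top_piecewise_of_continuousOn isCompact_Icc measurableSet_Iic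
    (hN₁.uncurry_left s hs) (hN₂.uncurry_left s hs)

end PIKernel

section IntervalKernelComposition

variable {u v w : ℕ} {a b : ℝ} {K : ℝ → Matrix (Fin u) (Fin v) ℝ}
  {L : ℝ → ℝ → Matrix (Fin v) (Fin w) ℝ} {y : ℝ → EuclideanSpace ℝ (Fin w)} (hab : a ≤ b)
  (hK : MemLp K ⊤ (volume.restrict (Icc a b)))
  (hL : MemLp (Function.uncurry L) ⊤
    ((volume.restrict (Icc a b)).prod (volume.restrict (Icc a b))))
  (hy : Integrable y (volume.restrict (Icc a b)))
include hab hK hL hy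

lemma intervalIntegrable_integral_mulVecE_mul :
    IntervalIntegrable (fun θ => ∫ η in a..b, mulVecE (K θ * L θ η) (y η)) volume a b := by
  simp_rw [intervalIntegral_eq_integral_Icc hab]
  exact (integrable_prod_mulVecE_mul hK hL hy).integral_prod_left.intervalIntegrable_of_mem
    (left_mem_Icc.2 hab) (right_mem_Icc.2 hab)

lemma intervalIntegrable_mulVecE_integral_mul :
    IntervalIntegrable (fun η => mulVecE (∫ θ in a..b, K θ * L θ η) (y η)) volume a b := by
  simp_rw [intervalIntegral_eq_integral_Icc hab]
  exact (integrable_mulVecE_integral_mul hK hL hy).intervalIntegrable_of_mem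
    (left_mem_Icc.2 hab) (right_mem_Icc.2 hab)

lemma intervalIntegral_integral_mulVecE_mul :
    ∫ θ in a..b, ∫ η in a..b, mulVecE (K θ * L θ η) (y η)
      = ∫ η in a..b, mulVecE (∫ θ in a..b, K θ * L θ η) (y η) := by
  simp_rw [intervalIntegral_eq_integral_Icc hab]
  exact integral_integral_mulVecE_mul hK hL hy

end IntervalKernelComposition

section ThreePI

variable {n m : ℕ} {a b s : ℝ} {N₀ : ℝ → Matrix (Fin n) (Fin m) ℝ}
  {N₁ N₂ : ℝ → ℝ → Matrix (Fin n) (Fin m) ℝ} {y : ℝ → EuclideanSpace ℝ (Fin m)}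

lemma threePI_eq_of_eqOn {G : ℝ → Matrix (Fin n) (Fin m) ℝ} (hs : s ∈ Icc a b)
    (hG : IntervalIntegrable (fun θ => mulVecE (G θ) (y θ)) volume a b)
    (h₁ : EqOn (N₁ s) G (Ioo a s)) (h₂ : EqOn (N₂ s) G (Ioo s b)) :
    threePI a b N₀ N₁ N₂ y s = mulVecE (N₀ s) (y s) + ∫ θ in a..b, mulVecE (G θ) (y θ) := by
  have hab : a ≤ b := hs.1.trans hs.2
  rw [threePI, add_assoc, ← intervalIntegral.integral_add_adjacent_intervals
      (hG.mono_set (uIcc_subset_uIcc_left (uIcc_of_le hab ▸ hs)))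
      (hG.mono_set (uIcc_subset_uIcc_right (uIcc_of_le hab ▸ hs))),
    intervalIntegral.integral_congr_Ioo_of_le hs.1 fun θ hθ => by rw [h₁ hθ],
    intervalIntegral.integral_congr_Ioo_of_le hs.2 fun θ hθ => by rw [h₂ hθ]]

lemma threePI_eq_integral_piKernel (hs : s ∈ Icc a b)
    (hN₁ : ContinuousOn (fun z : ℝ × ℝ => N₁ z.1 z.2) (Icc a b ×ˢ Icc a b))
    (hN₂ : ContinuousOn (fun z : ℝ × ℝ => N₂ z.1 z.2) (Icc a b ×ˢ Icc a b))
    (hy : Integrable y (volume.restrict (Icc a b))) :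
    threePI a b N₀ N₁ N₂ y s
      = mulVecE (N₀ s) (y s) + ∫ θ in a..b, mulVecE (piKernel N₁ N₂ s θ) (y θ) :=
  threePI_eq_of_eqOn hs
    (((memLp_top_piKernel_apply hN₁ hN₂ hs).integrable_mulVecE hy).intervalIntegrable_of_mem
      (left_mem_Icc.2 (hs.1.trans hs.2)) (right_mem_Icc.2 (hs.1.trans hs.2)))
    (fun _ hθ => (piKernel_of_le hθ.2.le).symm) (fun _ hθ => (piKernel_of_lt hθ.1).symm)

end ThreePI

section KernelIdentities

variable {p n r : ℕ} {a b s η : ℝ} {M : ℝ → Matrix (Fin p) (Fin n) ℝ}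
  {C₁ C₂ : ℝ → ℝ → Matrix (Fin p) (Fin n) ℝ} {R₁ R₂ : ℝ → ℝ → Matrix (Fin n) (Fin r) ℝ}

lemma intervalIntegral_piKernel_mul {N : ℝ → Matrix (Fin n) (Fin r) ℝ}
    (hC₁ : ContinuousOn (fun z : ℝ × ℝ => C₁ z.1 z.2) (Icc a b ×ˢ Icc a b))
    (hC₂ : ContinuousOn (fun z : ℝ × ℝ => C₂ z.1 z.2) (Icc a b ×ˢ Icc a b))
    (hN : ContinuousOn N (Icc a b)) (hs : s ∈ Icc a b) :
    ∫ θ in a..b, piKernel C₁ C₂ s θ * N θ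
      = (∫ θ in a..s, C₁ s θ * N θ) + ∫ θ in s..b, C₂ s θ * N θ :=
  have hab : a ≤ b := hs.1.trans hs.2
  intervalIntegral_eq_add_of_eqOn_Ioo hs.1 hs.2
    (((hC₁.uncurry_left s hs).matrix_mul hN).intervalIntegrable_of_mem (left_mem_Icc.2 hab) hs)
    (((hC₂.uncurry_left s hs).matrix_mul hN).intervalIntegrable_of_mem hs (right_mem_Icc.2 hab))
    (fun _ hθ => by rw [piKernel_of_le hθ.2.le]) (fun _ hθ => by rw [piKernel_of_lt hθ.1])

lemma intervalIntegral_mul_piKernel (hM : ContinuousOn M (Icc a b))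
    (hR₁ : ContinuousOn (fun z : ℝ × ℝ => R₁ z.1 z.2) (Icc a b ×ˢ Icc a b))
    (hR₂ : ContinuousOn (fun z : ℝ × ℝ => R₂ z.1 z.2) (Icc a b ×ˢ Icc a b)) (hs : s ∈ Icc a b) :
    ∫ θ in a..b, M θ * piKernel R₁ R₂ θ s
      = (∫ θ in a..s, M θ * R₂ θ s) + ∫ θ in s..b, M θ * R₁ θ s :=
  have hab : a ≤ b := hs.1.trans hs.2
  intervalIntegral_eq_add_of_eqOn_Ioo hs.1 hs.2
    ((hM.matrix_mul (hR₂.uncurry_right s hs)).intervalIntegrable_of_mem (left_mem_Icc.2 hab) hs)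
    ((hM.matrix_mul (hR₁.uncurry_right s hs)).intervalIntegrable_of_mem hs (right_mem_Icc.2 hab))
    (fun _ hθ => by rw [piKernel_of_lt hθ.2]) (fun _ hθ => by rw [piKernel_of_le hθ.1.le])

variable (hC₁ : ContinuousOn (fun z : ℝ × ℝ => C₁ z.1 z.2) (Icc a b ×ˢ Icc a b))
  (hC₂ : ContinuousOn (fun z : ℝ × ℝ => C₂ z.1 z.2) (Icc a b ×ˢ Icc a b))
  (hR₁ : ContinuousOn (fun z : ℝ × ℝ => R₁ z.1 z.2) (Icc a b ×ˢ Icc a b))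
  (hR₂ : ContinuousOn (fun z : ℝ × ℝ => R₂ z.1 z.2) (Icc a b ×ˢ Icc a b))
include hC₁ hC₂ hR₁ hR₂

lemma intervalIntegral_piKernel_mul_piKernel_of_le (haη : a ≤ η) (hηs : η ≤ s) (hsb : s ≤ b) :
    ∫ θ in a..b, piKernel C₁ C₂ s θ * piKernel R₁ R₂ θ η
      = (∫ θ in a..η, C₁ s θ * R₂ θ η) + (∫ θ in η..s, C₁ s θ * R₁ θ η)
        + ∫ θ in s..b, C₂ s θ * R₁ θ η := by
  have hs : s ∈ Icc a b := ⟨haη.trans hηs, hsb⟩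
  have hη : η ∈ Icc a b := ⟨haη, hηs.trans hsb⟩
  exact intervalIntegral_eq_add_add_of_eqOn_Ioo haη hηs hsb
    (((hC₁.uncurry_left s hs).matrix_mul (hR₂.uncurry_right η hη)).intervalIntegrable_of_mem
      (left_mem_Icc.2 (hs.1.trans hsb)) hη)
    (((hC₁.uncurry_left s hs).matrix_mul (hR₁.uncurry_right η hη)).intervalIntegrable_of_mem hη hs)
    (((hC₂.uncurry_left s hs).matrix_mul (hR₁.uncurry_right η hη)).intervalIntegrable_of_mem hs
      (right_mem_Icc.2 (hs.1.trans hsb)))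
    (fun θ hθ => by simp only [piKernel_of_le (hθ.2.trans_le hηs).le, piKernel_of_lt hθ.2])
    (fun θ hθ => by simp only [piKernel_of_le hθ.2.le, piKernel_of_le hθ.1.le])
    (fun θ hθ => by simp only [piKernel_of_lt hθ.1, piKernel_of_le (hηs.trans hθ.1.le)])

lemma intervalIntegral_piKernel_mul_piKernel_of_lt (has : a ≤ s) (hsη : s < η) (hηb : η ≤ b) :
    ∫ θ in a..b, piKernel C₁ C₂ s θ * piKernel R₁ R₂ θ η
      = (∫ θ in a..s, C₁ s θ * R₂ θ η) + (∫ θ in s..η, C₂ s θ * R₂ θ η)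
        + ∫ θ in η..b, C₂ s θ * R₁ θ η := by
  have hs : s ∈ Icc a b := ⟨has, hsη.le.trans hηb⟩
  have hη : η ∈ Icc a b := ⟨has.trans hsη.le, hηb⟩
  exact intervalIntegral_eq_add_add_of_eqOn_Ioo has hsη.le hηb
    (((hC₁.uncurry_left s hs).matrix_mul (hR₂.uncurry_right η hη)).intervalIntegrable_of_mem
      (left_mem_Icc.2 (hs.1.trans hs.2)) hs)
    (((hC₂.uncurry_left s hs).matrix_mul (hR₂.uncurry_right η hη)).intervalIntegrable_of_mem hs hη)
    (((hC₂.uncurry_left s hs).matrix_mul (hR₁.uncurry_right η hη)).intervalIntegrable_of_mem hη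
      (right_mem_Icc.2 (hs.1.trans hs.2)))
    (fun θ hθ => by simp only [piKernel_of_le hθ.2.le, piKernel_of_lt (hθ.2.trans hsη)])
    (fun θ hθ => by simp only [piKernel_of_lt hθ.1, piKernel_of_lt hθ.2])
    (fun θ hθ => by simp only [piKernel_of_lt (hsη.trans hθ.1), piKernel_of_le hθ.1.le])

end KernelIdentities

section FourPI

variable {p k n m r : ℕ} {a b : ℝ} {P : Matrix (Fin k) (Fin m) ℝ}
  {Q₁ : ℝ → Matrix (Fin k) (Fin r) ℝ} {Q₂ : ℝ → Matrix (Fin n) (Fin m) ℝ}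
  {R₀ : ℝ → Matrix (Fin n) (Fin r) ℝ} {R₁ R₂ : ℝ → ℝ → Matrix (Fin n) (Fin r) ℝ}
  {x : EuclideanSpace ℝ (Fin m)} {y : ℝ → EuclideanSpace ℝ (Fin r)}

lemma mulVecE_fourPIfin (M : Matrix (Fin p) (Fin k) ℝ) (hab : a ≤ b)
    (hQ₁ : ContinuousOn Q₁ (Icc a b)) (hy : Integrable y (volume.restrict (Icc a b))) :
    mulVecE M (fourPIfin a b P Q₁ x y)
      = mulVecE (M * P) x + ∫ s in a..b, mulVecE (M * Q₁ s) (y s) := by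
  rw [fourPIfin, mulVecE_add, mulVecE_mulVecE, mulVecE_intervalIntegral M
    (((hQ₁.memLp_top_restrict isCompact_Icc).integrable_mulVecE hy).intervalIntegrable_of_mem
      (left_mem_Icc.2 hab) (right_mem_Icc.2 hab))]
  simp only [mulVecE_mulVecE]

variable (hR₁ : ContinuousOn (fun z : ℝ × ℝ => R₁ z.1 z.2) (Icc a b ×ˢ Icc a b))
  (hR₂ : ContinuousOn (fun z : ℝ × ℝ => R₂ z.1 z.2) (Icc a b ×ˢ Icc a b))
  (hy : Integrable y (volume.restrict (Icc a b)))
include hR₁ hR₂ hy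

lemma mulVecE_fourPIfun (M : Matrix (Fin p) (Fin n) ℝ) {θ : ℝ} (hθ : θ ∈ Icc a b) :
    mulVecE M (fourPIfun a b Q₂ R₀ R₁ R₂ x y θ)
      = mulVecE (M * Q₂ θ) x + mulVecE (M * R₀ θ) (y θ)
        + ∫ η in a..b, mulVecE (M * piKernel R₁ R₂ θ η) (y η) := by
  rw [fourPIfun, threePI_eq_integral_piKernel hθ hR₁ hR₂ hy, mulVecE_add, mulVecE_add,
    mulVecE_intervalIntegral M (((memLp_top_piKernel_apply hR₁ hR₂ hθ).integrable_mulVecE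
      hy).intervalIntegrable_of_mem (left_mem_Icc.2 (hθ.1.trans hθ.2))
      (right_mem_Icc.2 (hθ.1.trans hθ.2)))]
  simp only [mulVecE_mulVecE, add_assoc]

lemma integrable_fourPIfun (hab : a ≤ b) (hQ₂ : ContinuousOn Q₂ (Icc a b))
    (hR₀ : ContinuousOn R₀ (Icc a b)) :
    Integrable (fourPIfun a b Q₂ R₀ R₁ R₂ x y) (volume.restrict (Icc a b)) := by
  have hQ₂x := (hQ₂.memLp_top_restrict (μ := volume) isCompact_Icc).integrable_mulVecE
    (integrable_const x)
  have hR₀y := (hR₀.memLp_top_restrict isCompact_Icc).integrable_mulVecE hy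
  have hKy := integrable_integral_mulVecE (memLp_top_piKernel hR₁ hR₂) hy
  refine ((hQ₂x.add hR₀y).add hKy).congr (ae_restrict_of_forall_mem measurableSet_Icc ?_)
  intro θ hθ
  simp only [Pi.add_apply, fourPIfun, threePI_eq_integral_piKernel hθ hR₁ hR₂ hy,
    intervalIntegral_eq_integral_Icc hab, add_assoc]

lemma integral_mulVecE_fourPIfun {M : ℝ → Matrix (Fin p) (Fin n) ℝ} (hab : a ≤ b)
    (hM : MemLp M ⊤ (volume.restrict (Icc a b))) (hQ₂ : ContinuousOn Q₂ (Icc a b))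
    (hR₀ : ContinuousOn R₀ (Icc a b)) :
    ∫ θ in a..b, mulVecE (M θ) (fourPIfun a b Q₂ R₀ R₁ R₂ x y θ)
      = mulVecE (∫ θ in a..b, M θ * Q₂ θ) x + (∫ θ in a..b, mulVecE (M θ * R₀ θ) (y θ))
        + ∫ η in a..b, mulVecE (∫ θ in a..b, M θ * piKernel R₁ R₂ θ η) (y η) := by
  have ha : a ∈ Icc a b := left_mem_Icc.2 hab
  have hb : b ∈ Icc a b := right_mem_Icc.2 hab
  have hMQ₂ := hM.matrix_mul_top (hQ₂.memLp_top_restrict isCompact_Icc)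
  have hMR₀ := hM.matrix_mul_top (hR₀.memLp_top_restrict isCompact_Icc)
  have hK := memLp_top_piKernel hR₁ hR₂
  have hQ₂x : IntervalIntegrable (fun θ => mulVecE (M θ * Q₂ θ) x) volume a b :=
    (hMQ₂.integrable_mulVecE (integrable_const x)).intervalIntegrable_of_mem ha hb
  have hR₀y : IntervalIntegrable (fun θ => mulVecE (M θ * R₀ θ) (y θ)) volume a b :=
    (hMR₀.integrable_mulVecE hy).intervalIntegrable_of_mem ha hb
  rw [intervalIntegral.integral_congr fun θ hθ =>
      mulVecE_fourPIfun hR₁ hR₂ hy (M θ) (uIcc_of_le hab ▸ hθ),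
    intervalIntegral.integral_add (hQ₂x.add hR₀y)
      (intervalIntegrable_integral_mulVecE_mul hab hM hK hy),
    intervalIntegral.integral_add hQ₂x hR₀y,
    intervalIntegral_mulVecE x ((hMQ₂.integrable le_top).intervalIntegrable_of_mem ha hb),
    intervalIntegral_integral_mulVecE_mul hab hM hK hy]

end FourPI

section Composition

variable {p q k n m r : ℕ} {a b : ℝ} {A : Matrix (Fin p) (Fin k) ℝ}
  {B₁ : ℝ → Matrix (Fin p) (Fin n) ℝ} {B₂ : ℝ → Matrix (Fin q) (Fin k) ℝ}
  {C₀ : ℝ → Matrix (Fin q) (Fin n) ℝ} {C₁ C₂ : ℝ → ℝ → Matrix (Fin q) (Fin n) ℝ}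
  {P : Matrix (Fin k) (Fin m) ℝ} {Q₁ : ℝ → Matrix (Fin k) (Fin r) ℝ}
  {Q₂ : ℝ → Matrix (Fin n) (Fin m) ℝ} {R₀ : ℝ → Matrix (Fin n) (Fin r) ℝ}
  {R₁ R₂ : ℝ → ℝ → Matrix (Fin n) (Fin r) ℝ}
  {x : EuclideanSpace ℝ (Fin m)} {y : ℝ → EuclideanSpace ℝ (Fin r)}

lemma fourPIfin_comp_eq {N : ℝ → Matrix (Fin p) (Fin r) ℝ} (hab : a ≤ b)
    (hB₁ : ContinuousOn B₁ (Icc a b)) (hQ₁ : ContinuousOn Q₁ (Icc a b))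
    (hQ₂ : ContinuousOn Q₂ (Icc a b)) (hR₀ : ContinuousOn R₀ (Icc a b))
    (hR₁ : ContinuousOn (fun z : ℝ × ℝ => R₁ z.1 z.2) (Icc a b ×ˢ Icc a b))
    (hR₂ : ContinuousOn (fun z : ℝ × ℝ => R₂ z.1 z.2) (Icc a b ×ˢ Icc a b))
    (hy : Integrable y (volume.restrict (Icc a b)))
    (hN : ∀ s ∈ Icc a b, N s = A * Q₁ s + B₁ s * R₀ s + ∫ η in a..b, B₁ η * piKernel R₁ R₂ η s) :
    fourPIfin a b A B₁ (fourPIfin a b P Q₁ x y) (fourPIfun a b Q₂ R₀ R₁ R₂ x y)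
      = fourPIfin a b (A * P + ∫ s in a..b, B₁ s * Q₂ s) N x y := by
  have ha : a ∈ Icc a b := left_mem_Icc.2 hab
  have hb : b ∈ Icc a b := right_mem_Icc.2 hab
  have hB₁' := hB₁.memLp_top_restrict (μ := volume) isCompact_Icc
  have hAQ₁ : IntervalIntegrable (fun s => mulVecE (A * Q₁ s) (y s)) volume a b :=
    (((continuousOn_const.matrix_mul hQ₁).memLp_top_restrict isCompact_Icc).integrable_mulVecE
      hy).intervalIntegrable_of_mem ha hb
  have hB₁R₀ : IntervalIntegrable (fun s => mulVecE (B₁ s * R₀ s) (y s)) volume a b :=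
    (((hB₁.matrix_mul hR₀).memLp_top_restrict isCompact_Icc).integrable_mulVecE
      hy).intervalIntegrable_of_mem ha hb
  have hK := intervalIntegrable_mulVecE_integral_mul hab hB₁' (memLp_top_piKernel hR₁ hR₂) hy
  have hNy : ∫ s in a..b, mulVecE (N s) (y s)
      = (∫ s in a..b, mulVecE (A * Q₁ s) (y s)) + (∫ s in a..b, mulVecE (B₁ s * R₀ s) (y s))
        + ∫ s in a..b, mulVecE (∫ η in a..b, B₁ η * piKernel R₁ R₂ η s) (y s) := by
    rw [← intervalIntegral.integral_add hAQ₁ hB₁R₀,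
      ← intervalIntegral.integral_add (hAQ₁.add hB₁R₀) hK]
    exact intervalIntegral.integral_congr fun s hs => by
      simp only [hN s (uIcc_of_le hab ▸ hs), add_mulVecE]
  rw [fourPIfin, mulVecE_fourPIfin A hab hQ₁ hy,
    integral_mulVecE_fourPIfun hR₁ hR₂ hy hab hB₁' hQ₂ hR₀, fourPIfin, add_mulVecE, hNy]
  abel

variable (a b B₂ C₀ C₁ C₂ Q₁ R₀ R₁ R₂) in
/-- The kernel of the integral part of the composite's function component; it agrees with `R̂₁`
below the diagonal and with `R̂₂` above it. -/
noncomputable def compKernel (s η : ℝ) : Matrix (Fin q) (Fin r) ℝ :=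
  B₂ s * Q₁ η + C₀ s * piKernel R₁ R₂ s η + piKernel C₁ C₂ s η * R₀ η
    + ∫ θ in a..b, piKernel C₁ C₂ s θ * piKernel R₁ R₂ θ η

lemma fourPIfun_comp_apply {N : ℝ → Matrix (Fin q) (Fin m) ℝ}
    {N₁ N₂ : ℝ → ℝ → Matrix (Fin q) (Fin r) ℝ} {s : ℝ} (hs : s ∈ Icc a b)
    (hC₁ : ContinuousOn (fun z : ℝ × ℝ => C₁ z.1 z.2) (Icc a b ×ˢ Icc a b))
    (hC₂ : ContinuousOn (fun z : ℝ × ℝ => C₂ z.1 z.2) (Icc a b ×ˢ Icc a b))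
    (hQ₁ : ContinuousOn Q₁ (Icc a b)) (hQ₂ : ContinuousOn Q₂ (Icc a b))
    (hR₀ : ContinuousOn R₀ (Icc a b))
    (hR₁ : ContinuousOn (fun z : ℝ × ℝ => R₁ z.1 z.2) (Icc a b ×ˢ Icc a b))
    (hR₂ : ContinuousOn (fun z : ℝ × ℝ => R₂ z.1 z.2) (Icc a b ×ˢ Icc a b))
    (hy : Integrable y (volume.restrict (Icc a b)))
    (h₀ : N s = B₂ s * P + C₀ s * Q₂ s + ∫ θ in a..b, piKernel C₁ C₂ s θ * Q₂ θ)
    (h₁ : EqOn (N₁ s) (compKernel a b B₂ C₀ C₁ C₂ Q₁ R₀ R₁ R₂ s) (Ioo a s))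
    (h₂ : EqOn (N₂ s) (compKernel a b B₂ C₀ C₁ C₂ Q₁ R₀ R₁ R₂ s) (Ioo s b)) :
    fourPIfun a b B₂ C₀ C₁ C₂ (fourPIfin a b P Q₁ x y) (fourPIfun a b Q₂ R₀ R₁ R₂ x y) s
      = fourPIfun a b N (fun s => C₀ s * R₀ s) N₁ N₂ x y s := by
  have hab : a ≤ b := hs.1.trans hs.2
  have ha : a ∈ Icc a b := left_mem_Icc.2 hab
  have hb : b ∈ Icc a b := right_mem_Icc.2 hab
  have hKC := memLp_top_piKernel_apply hC₁ hC₂ hs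
  have hKR := memLp_top_piKernel hR₁ hR₂
  have hBQ : IntervalIntegrable (fun η => mulVecE (B₂ s * Q₁ η) (y η)) volume a b :=
    (((continuousOn_const.matrix_mul hQ₁).memLp_top_restrict isCompact_Icc).integrable_mulVecE
      hy).intervalIntegrable_of_mem ha hb
  have hCR : IntervalIntegrable (fun η => mulVecE (C₀ s * piKernel R₁ R₂ s η) (y η)) volume a b :=
    (((memLp_top_const (C₀ s)).matrix_mul_top
      (memLp_top_piKernel_apply hR₁ hR₂ hs)).integrable_mulVecE hy).intervalIntegrable_of_mem ha hb
  have hKR₀ : IntervalIntegrable (fun η => mulVecE (piKernel C₁ C₂ s η * R₀ η) (y η)) volume a b :=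
    ((hKC.matrix_mul_top (hR₀.memLp_top_restrict isCompact_Icc)).integrable_mulVecE
      hy).intervalIntegrable_of_mem ha hb
  have hKK := intervalIntegrable_mulVecE_integral_mul hab hKC hKR hy
  have hG : IntervalIntegrable
      (fun η => mulVecE (compKernel a b B₂ C₀ C₁ C₂ Q₁ R₀ R₁ R₂ s η) (y η)) volume a b := by
    simpa only [compKernel, add_mulVecE] using ((hBQ.add hCR).add hKR₀).add hKK
  rw [fourPIfun, fourPIfun, threePI_eq_of_eqOn hs hG h₁ h₂, h₀,
    threePI_eq_integral_piKernel hs hC₁ hC₂ (integrable_fourPIfun hR₁ hR₂ hy hab hQ₂ hR₀),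
    mulVecE_fourPIfin (B₂ s) hab hQ₁ hy, mulVecE_fourPIfun hR₁ hR₂ hy (C₀ s) hs,
    integral_mulVecE_fourPIfun hR₁ hR₂ hy hab hKC hQ₂ hR₀]
  simp only [compKernel, add_mulVecE]
  rw [intervalIntegral.integral_add ((hBQ.add hCR).add hKR₀) hKK,
    intervalIntegral.integral_add (hBQ.add hCR) hKR₀, intervalIntegral.integral_add hBQ hCR]
  abel

end Composition

end

theorem fourPI_comp_general {p q k n m r : ℕ} {a b : ℝ} (hab : a < b)
    (A : Matrix (Fin p) (Fin k) ℝ)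
    (B₁ : ℝ → Matrix (Fin p) (Fin n) ℝ) (B₂ : ℝ → Matrix (Fin q) (Fin k) ℝ)
    (C₀ : ℝ → Matrix (Fin q) (Fin n) ℝ) (C₁ C₂ : ℝ → ℝ → Matrix (Fin q) (Fin n) ℝ)
    (P : Matrix (Fin k) (Fin m) ℝ)
    (Q₁ : ℝ → Matrix (Fin k) (Fin r) ℝ) (Q₂ : ℝ → Matrix (Fin n) (Fin m) ℝ)
    (R₀ : ℝ → Matrix (Fin n) (Fin r) ℝ) (R₁ R₂ : ℝ → ℝ → Matrix (Fin n) (Fin r) ℝ)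
    (hB₁ : ContinuousOn B₁ (Icc a b))
    (hC₁ : ContinuousOn (fun z : ℝ × ℝ => C₁ z.1 z.2) (Icc a b ×ˢ Icc a b))
    (hC₂ : ContinuousOn (fun z : ℝ × ℝ => C₂ z.1 z.2) (Icc a b ×ˢ Icc a b))
    (hQ₁ : ContinuousOn Q₁ (Icc a b)) (hQ₂ : ContinuousOn Q₂ (Icc a b))
    (hR₀ : ContinuousOn R₀ (Icc a b))
    (hR₁ : ContinuousOn (fun z : ℝ × ℝ => R₁ z.1 z.2) (Icc a b ×ˢ Icc a b))
    (hR₂ : ContinuousOn (fun z : ℝ × ℝ => R₂ z.1 z.2) (Icc a b ×ˢ Icc a b))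
    (x : EuclideanSpace ℝ (Fin m)) (y : ℝ → EuclideanSpace ℝ (Fin r))
    (hy : MemLp y 2 (volume.restrict (Icc a b))) :
    fourPIfin a b A B₁ (fourPIfin a b P Q₁ x y) (fourPIfun a b Q₂ R₀ R₁ R₂ x y)
        = fourPIfin a b
            (A * P + ∫ s in a..b, B₁ s * Q₂ s)
            (fun s => A * Q₁ s + B₁ s * R₀ s + (∫ η in s..b, B₁ η * R₁ η s)
              + ∫ η in a..s, B₁ η * R₂ η s)
            x y ∧
    ∀ᵐ s ∂(volume.restrict (Icc a b)),
      fourPIfun a b B₂ C₀ C₁ C₂ (fourPIfin a b P Q₁ x y) (fourPIfun a b Q₂ R₀ R₁ R₂ x y) s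
        = fourPIfun a b
            (fun s => B₂ s * P + C₀ s * Q₂ s + (∫ η in a..s, C₁ s η * Q₂ η)
              + ∫ η in s..b, C₂ s η * Q₂ η)
            (fun s => C₀ s * R₀ s)
            (fun s η => B₂ s * Q₁ η + C₀ s * R₁ s η + C₁ s η * R₀ η
              + (∫ θ in a..η, C₁ s θ * R₂ θ η) + (∫ θ in η..s, C₁ s θ * R₁ θ η)
              + ∫ θ in s..b, C₂ s θ * R₁ θ η)
            (fun s η => B₂ s * Q₁ η + C₀ s * R₂ s η + C₂ s η * R₀ η
              + (∫ θ in a..s, C₁ s θ * R₂ θ η) + (∫ θ in s..η, C₂ s θ * R₂ θ η)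
              + ∫ θ in η..b, C₂ s θ * R₁ θ η)
            x y s := by
  have hy' : Integrable y (volume.restrict (Icc a b)) := hy.integrable one_le_two
  refine ⟨fourPIfin_comp_eq hab.le hB₁ hQ₁ hQ₂ hR₀ hR₁ hR₂ hy' fun s hs => ?_,
    ae_restrict_of_forall_mem measurableSet_Icc fun s hs =>
      fourPIfun_comp_apply hs hC₁ hC₂ hQ₁ hQ₂ hR₀ hR₁ hR₂ hy' ?_ (fun η hη => ?_) (fun η hη => ?_)⟩
  · rw [intervalIntegral_mul_piKernel hB₁ hR₁ hR₂ hs]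
    abel
  · rw [intervalIntegral_piKernel_mul hC₁ hC₂ hQ₂ hs]
    abel
  · simp only [compKernel, piKernel_of_le hη.2.le,
      intervalIntegral_piKernel_mul_piKernel_of_le hC₁ hC₂ hR₁ hR₂ hη.1.le hη.2.le hs.2]
    abel
  · simp only [compKernel, piKernel_of_lt hη.1,
      intervalIntegral_piKernel_mul_piKernel_of_lt hC₁ hC₂ hR₁ hR₂ hs.1 hη.1 hη.2.le]
    abel

/-- Composition of the 4-PI operators `Π[A,B₁,B₂,C₀,C₁,C₂] : ℝ^k × L²(ℝ^n) → ℝ^p × L²(ℝ^q)`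
and `Π[P,Q₁,Q₂,R₀,R₁,R₂] : ℝ^m × L²(ℝ^r) → ℝ^k × L²(ℝ^n)` equals the 4-PI operator
`Π[P̂,Q̂₁,Q̂₂,R̂₀,R̂₁,R̂₂]` with the stated composite parameters. -/
theorem fourPI_comp {p q k n m r : ℕ} {a b : ℝ} (hab : a < b)
    (A : Matrix (Fin p) (Fin k) ℝ)
    (B₁ : ℝ → Matrix (Fin p) (Fin n) ℝ) (B₂ : ℝ → Matrix (Fin q) (Fin k) ℝ)
    (C₀ : ℝ → Matrix (Fin q) (Fin n) ℝ) (C₁ C₂ : ℝ → ℝ → Matrix (Fin q) (Fin n) ℝ)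
    (P : Matrix (Fin k) (Fin m) ℝ)
    (Q₁ : ℝ → Matrix (Fin k) (Fin r) ℝ) (Q₂ : ℝ → Matrix (Fin n) (Fin m) ℝ)
    (R₀ : ℝ → Matrix (Fin n) (Fin r) ℝ) (R₁ R₂ : ℝ → ℝ → Matrix (Fin n) (Fin r) ℝ)
    (hB₁ : ContinuousOn B₁ (Icc a b)) (hB₂ : ContinuousOn B₂ (Icc a b))
    (hC₀ : ContinuousOn C₀ (Icc a b))
    (hC₁ : ContinuousOn (fun z : ℝ × ℝ => C₁ z.1 z.2) (Icc a b ×ˢ Icc a b))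
    (hC₂ : ContinuousOn (fun z : ℝ × ℝ => C₂ z.1 z.2) (Icc a b ×ˢ Icc a b))
    (hQ₁ : ContinuousOn Q₁ (Icc a b)) (hQ₂ : ContinuousOn Q₂ (Icc a b))
    (hR₀ : ContinuousOn R₀ (Icc a b))
    (hR₁ : ContinuousOn (fun z : ℝ × ℝ => R₁ z.1 z.2) (Icc a b ×ˢ Icc a b))
    (hR₂ : ContinuousOn (fun z : ℝ × ℝ => R₂ z.1 z.2) (Icc a b ×ˢ Icc a b))
    (x : EuclideanSpace ℝ (Fin m)) (y : ℝ → EuclideanSpace ℝ (Fin r))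
    (hy : MemLp y 2 (volume.restrict (Icc a b))) :
    fourPIfin a b A B₁ (fourPIfin a b P Q₁ x y) (fourPIfun a b Q₂ R₀ R₁ R₂ x y)
        = fourPIfin a b
            (A * P + ∫ s in a..b, B₁ s * Q₂ s)
            (fun s => A * Q₁ s + B₁ s * R₀ s + (∫ η in s..b, B₁ η * R₁ η s)
              + ∫ η in a..s, B₁ η * R₂ η s)
            x y ∧
    ∀ᵐ s ∂(volume.restrict (Icc a b)),
      fourPIfun a b B₂ C₀ C₁ C₂ (fourPIfin a b P Q₁ x y) (fourPIfun a b Q₂ R₀ R₁ R₂ x y) s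
        = fourPIfun a b
            (fun s => B₂ s * P + C₀ s * Q₂ s + (∫ η in a..s, C₁ s η * Q₂ η)
              + ∫ η in s..b, C₂ s η * Q₂ η)
            (fun s => C₀ s * R₀ s)
            (fun s η => B₂ s * Q₁ η + C₀ s * R₁ s η + C₁ s η * R₀ η
              + (∫ θ in a..η, C₁ s θ * R₂ θ η) + (∫ θ in η..s, C₁ s θ * R₁ θ η)
              + ∫ θ in s..b, C₂ s θ * R₁ θ η)
            (fun s η => B₂ s * Q₁ η + C₀ s * R₂ s η + C₂ s η * R₀ η
              + (∫ θ in a..s, C₁ s θ * R₂ θ η) + (∫ θ in s..η, C₂ s θ * R₂ θ η)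
              + ∫ θ in η..b, C₂ s θ * R₁ θ η)
            x y s :=
  fourPI_comp_general hab A B₁ B₂ C₀ C₁ C₂ P Q₁ Q₂ R₀ R₁ R₂ hB₁ hC₁ hC₂ hQ₁ hQ₂ hR₀ hR₁ hR₂ x y hy
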